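/- Let R be a ring with involution and let p, q ∈ R be projections. If pqp and p - q are both Moore–Penrose invertible, then pqp·(p-q)² is Moore–Penrose invertible and (pqp·(p-q)²)^† = (pqp)^†·(p-q)^†·(p-q)^†. -/
import Mathlib


/-- `b` is a Moore–Penrose inverse of `a`. -/
def IsMPInv {R : Type*} [Ring R] [StarRing R] (a b : R) : Prop :=
  a * b * a = a ∧ b * a * b = b ∧ star (a * b) = a * b ∧ star (b * a) = b * a

/-- `a` is Moore–Penrose invertible. -/
def IsMPInvertible {R : Type*} [Ring R] [StarRing R] (a : R) : Prop :=
  ∃ b, IsMPInv a b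

/-- A projection: a self-adjoint idempotent. -/
def IsProjection {R : Type*} [Ring R] [StarRing R] (p : R) : Prop :=
  p * p = p ∧ star p = p

/-- A `*`-reducing ring: `a* a = 0` implies `a = 0`. -/
def IsStarReducing (R : Type*) [Ring R] [StarRing R] : Prop :=
  ∀ a : R, star a * a = 0 → a = 0

section Aux
variable {R : Type*} [Ring R] [StarRing R]

lemma mp_star {a b : R} (h : IsMPInv a b) : IsMPInv (star a) (star b) := by
  obtain ⟨h1, h2, h3, h4⟩ := h
  refine ⟨?_, ?_, ?_, ?_⟩
  · rw [mul_assoc, ← star_mul, ← star_mul, h1]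
  · rw [mul_assoc, ← star_mul, ← star_mul, h2]
  · rw [← star_mul, star_star]; exact h4.symm
  · rw [← star_mul, star_star]; exact h3.symm

lemma mp_unique {a b c : R} (hb : IsMPInv a b) (hc : IsMPInv a c) : b = c := by
  obtain ⟨b1, b2, b3, b4⟩ := hb
  obtain ⟨c1, c2, c3, c4⟩ := hc
  have ha2 : star a = star a * (star c * star a) := by
    conv_lhs => rw [← c1]
    rw [star_mul, star_mul]
  have ha3 : star a = star a * (star b * star a) := by
    conv_lhs => rw [← b1]
    rw [star_mul, star_mul]
  have hb' : b = b * a * c := by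
    calc b = b * (a * b) := by rw [← mul_assoc, b2]
      _ = b * star (a * b) := by rw [b3]
      _ = b * (star b * star a) := by rw [star_mul]
      _ = b * (star b * (star a * (star c * star a))) := by rw [← ha2]
      _ = (b * (star b * star a)) * (star c * star a) := by simp only [mul_assoc]
      _ = (b * star (a * b)) * star (a * c) := by rw [star_mul, star_mul]
      _ = (b * (a * b)) * (a * c) := by rw [b3, c3]
      _ = b * a * b * (a * c) := by simp only [mul_assoc]
      _ = b * (a * c) := by rw [b2]
      _ = b * a * c := by rw [mul_assoc]
  have hc' : c = b * a * c := by
    calc c = (c * a) * c := by rw [c2]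
      _ = star (c * a) * c := by rw [c4]
      _ = (star a * star c) * c := by rw [star_mul]
      _ = ((star a * (star b * star a)) * star c) * c := by rw [← ha3]
      _ = ((star a * star b) * (star a * star c)) * c := by simp only [mul_assoc]
      _ = (star (b * a) * star (c * a)) * c := by rw [star_mul, star_mul]
      _ = ((b * a) * (c * a)) * c := by rw [b4, c4]
      _ = b * a * (c * a * c) := by simp only [mul_assoc]
      _ = b * a * c := by rw [c2]
  rw [hb', ← hc']

lemma mp_selfadj {a s : R} (ha : star a = a) (hs : IsMPInv a s) : star s = s := by
  have h := mp_star hs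
  rw [ha] at h
  exact mp_unique h hs

lemma mp_comm {a s : R} (ha : star a = a) (hss : star s = s) (hs : IsMPInv a s) :
    a * s = s * a := by
  calc a * s = star (a * s) := hs.2.2.1.symm
    _ = star s * star a := star_mul _ _
    _ = s * a := by rw [hss, ha]

/-- If `x` is self-adjoint and commutes with the self-adjoint element `a`,
then `x` commutes with the MP inverse of `a`. -/
lemma comm_key {a s x : R} (ha : star a = a) (hs : IsMPInv a s)
    (hx : star x = x) (hax : a * x = x * a) : s * x = x * s := by
  have hss : star s = s := mp_selfadj ha hs
  have has : a * s = s * a := mp_comm ha hss hs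
  have he : star (a * s) = a * s := hs.2.2.1
  have h1 : (a * s) * x * (a * s) = x * (a * s) := by
    calc (a * s) * x * (a * s) = a * s * (x * a) * s := by simp only [mul_assoc]
      _ = a * s * (a * x) * s := by rw [hax]
      _ = (a * s * a) * (x * s) := by simp only [mul_assoc]
      _ = a * (x * s) := by rw [hs.1]
      _ = (a * x) * s := by rw [mul_assoc]
      _ = (x * a) * s := by rw [hax]
      _ = x * (a * s) := by rw [mul_assoc]
  have h2 : (a * s) * x = x * (a * s) := by
    have h3 := congrArg star h1
    rw [star_mul ((a * s) * x) (a * s), star_mul (a * s) x, star_mul x (a * s),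
      hx, he] at h3
    -- h3 : (a*s) * (x * (a*s)) = (a*s) * x
    calc (a * s) * x = (a * s) * (x * (a * s)) := h3.symm
      _ = ((a * s) * x) * (a * s) := (mul_assoc _ _ _).symm
      _ = x * (a * s) := h1
  have hse : s * (a * s) = s := by rw [← mul_assoc, hs.2.1]
  have hes : (a * s) * s = s := by rw [has, mul_assoc, hse]
  calc s * x = (s * (a * s)) * x := by rw [hse]
    _ = s * ((a * s) * x) := by rw [mul_assoc]
    _ = s * (x * (a * s)) := by rw [h2]
    _ = s * ((x * a) * s) := by simp only [mul_assoc]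
    _ = s * ((a * x) * s) := by rw [hax]
    _ = ((s * a) * x) * s := by simp only [mul_assoc]
    _ = ((a * s) * x) * s := by rw [has]
    _ = (x * (a * s)) * s := by rw [h2]
    _ = x * ((a * s) * s) := by rw [mul_assoc]
    _ = x * s := by rw [hes]

lemma mp_sq {d t : R} (hd : star d = d) (ht : IsMPInv d t) : IsMPInv (d * d) (t * t) := by
  have hts : star t = t := mp_selfadj hd ht
  have hdt : d * t = t * d := mp_comm hd hts ht
  have key1 : (d * d) * (t * t) = d * t := by
    calc (d * d) * (t * t) = d * ((d * t) * t) := by simp only [mul_assoc]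
      _ = d * ((t * d) * t) := by rw [hdt]
      _ = d * (t * d * t) := by simp only [mul_assoc]
      _ = d * t := by rw [ht.2.1]
  have key2 : (t * t) * (d * d) = d * t := by
    calc (t * t) * (d * d) = t * ((t * d) * d) := by simp only [mul_assoc]
      _ = t * ((d * t) * d) := by rw [← hdt]
      _ = t * d := by rw [ht.1]
      _ = d * t := hdt.symm
  refine ⟨?_, ?_, ?_, ?_⟩
  · rw [key1, ← mul_assoc, ht.1]
  · rw [key2, hdt, ← mul_assoc, ht.2.1]
  · rw [key1, star_mul, hts, hd, hdt]
  · rw [key2, star_mul, hts, hd, hdt]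

lemma mp_prod {a c s u : R} (hs : IsMPInv a s) (hu : IsMPInv c u)
    (ha : star a = a) (hc : star c = c) (hss : star s = s) (huu : star u = u)
    (hac : a * c = c * a) (hsc : s * c = c * s) (hau : a * u = u * a)
    (hsu : s * u = u * s) : IsMPInv (a * c) (s * u) := by
  have has : a * s = s * a := mp_comm ha hss hs
  have hcu : c * u = u * c := mp_comm hc huu hu
  have r1 : ∀ x : R, s * (a * x) = a * (s * x) := fun x => by
    rw [← mul_assoc, ← has, mul_assoc]
  have r2 : ∀ x : R, c * (a * x) = a * (c * x) := fun x => by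
    rw [← mul_assoc, ← hac, mul_assoc]
  have r3 : ∀ x : R, u * (a * x) = a * (u * x) := fun x => by
    rw [← mul_assoc, ← hau, mul_assoc]
  have r4 : ∀ x : R, c * (s * x) = s * (c * x) := fun x => by
    rw [← mul_assoc, ← hsc, mul_assoc]
  have r5 : ∀ x : R, u * (s * x) = s * (u * x) := fun x => by
    rw [← mul_assoc, ← hsu, mul_assoc]
  have r6 : ∀ x : R, u * (c * x) = c * (u * x) := fun x => by
    rw [← mul_assoc, ← hcu, mul_assoc]
  have p1 : s * a = a * s := has.symm
  have p2 : c * a = a * c := hac.symm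
  have p3 : u * a = a * u := hau.symm
  have p4 : c * s = s * c := hsc.symm
  have p5 : u * s = s * u := hsu.symm
  have p6 : u * c = c * u := hcu.symm
  have q1 : ∀ x : R, a * (a * (s * x)) = a * x := fun x => by
    rw [← mul_assoc a s x, ← mul_assoc a (a*s) x, has, ← mul_assoc a s a, hs.1]
  have q1' : a * (a * s) = a := by rw [has, ← mul_assoc, hs.1]
  have q2 : ∀ x : R, a * (s * (s * x)) = s * x := fun x => by
    rw [← mul_assoc s s x, ← mul_assoc a (s*s) x, ← mul_assoc a s s, has, hs.2.1]
  have q2' : a * (s * s) = s := by rw [← mul_assoc, has, hs.2.1]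
  have q3 : ∀ x : R, c * (c * (u * x)) = c * x := fun x => by
    rw [← mul_assoc c u x, ← mul_assoc c (c*u) x, hcu, ← mul_assoc c u c, hu.1]
  have q3' : c * (c * u) = c := by rw [hcu, ← mul_assoc, hu.1]
  have q4 : ∀ x : R, c * (u * (u * x)) = u * x := fun x => by
    rw [← mul_assoc u u x, ← mul_assoc c (u*u) x, ← mul_assoc c u u, hcu, hu.2.1]
  have q4' : c * (u * u) = u := by rw [← mul_assoc, hcu, hu.2.1]
  refine ⟨?_, ?_, ?_, ?_⟩ <;>
    simp only [star_mul, ha, hc, hss, huu, mul_assoc, r1, r2, r3, r4, r5, r6,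
      p1, p2, p3, p4, p5, p6, q1, q1', q2, q2', q3, q3', q4, q4']

end Aux

theorem stmt_18 {R : Type*} [Ring R] [StarRing R] (p q s t : R)
    (hp : IsProjection p) (hq : IsProjection q)
    (hs : IsMPInv (p * q * p) s) (ht : IsMPInv (p - q) t) :
    IsMPInv (p * q * p * (p - q) ^ 2) (s * t * t) := by
  obtain ⟨hp1, hp2⟩ := hp
  obtain ⟨hq1, hq2⟩ := hq
  have hppx : ∀ x : R, p * (p * x) = p * x := fun x => by rw [← mul_assoc, hp1]
  have hqqx : ∀ x : R, q * (q * x) = q * x := fun x => by rw [← mul_assoc, hq1]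
  have ha : star (p * q * p) = p * q * p := by
    simp only [star_mul, hp2, hq2, mul_assoc]
  have hd : star (p - q) = p - q := by simp only [star_sub, hp2, hq2]
  have hc : star ((p - q) * (p - q)) = (p - q) * (p - q) := by rw [star_mul, hd]
  have hac : (p * q * p) * ((p - q) * (p - q)) = ((p - q) * (p - q)) * (p * q * p) := by
    simp only [mul_sub, sub_mul, mul_assoc, hppx, hqqx, hp1, hq1]
    abel
  have hss : star s = s := mp_selfadj ha hs
  have hu : IsMPInv ((p - q) * (p - q)) (t * t) := mp_sq hd ht
  have hts : star t = t := mp_selfadj hd ht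
  have huu : star (t * t) = t * t := by rw [star_mul, hts]
  have hL1 : (t * t) * (p * q * p) = (p * q * p) * (t * t) :=
    comm_key hc hu ha hac.symm
  have hsc2 : s * ((p - q) * (p - q)) = ((p - q) * (p - q)) * s :=
    comm_key ha hs hc hac
  have hsu : s * (t * t) = (t * t) * s := comm_key ha hs huu hL1.symm
  have main := mp_prod hs hu ha hc hss huu hac hsc2 hL1.symm hsu
  rw [pow_two, mul_assoc s t t]
  exact main
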